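/- Let ρ be a bipartite state on ℂ^m ⊗ ℂ^n with blocks ρ_{ij} (the n×n matrices (ρ_{ij})_{kl} = ρ_{(i,k),(j,l)}), and let ρ̃ = Σ_{i,j} E_{ij} ⊗ ρ_{ij} ⊗ E_{ij} be its one-sided pre-measurement state on ℂ^m ⊗ ℂ^n ⊗ ℂ^m. Then the trace norm of the partial transpose of ρ̃ with respect to the third tensor factor equals Σ_{i,j} ‖ρ_{ij}‖₁; hence the negativity of ρ̃ across the cut (first two factors):(third factor) equals (1/2)(Σ_{i,j} ‖ρ_{ij}‖₁ − 1). -/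

import Mathlib

/-!
The partial transpose of `ρ̃ = Σ E_{ij} ⊗ ρ_{ij} ⊗ E_{ij}` on the third factor has its only
nonzero entries at rows `(i, k, j)` and columns `(j, l, i)`, where it equals `(ρ_{ij})_{kl}`.
Reindexing rows and columns by two different permutations therefore turns it into the block
diagonal matrix `⊕_{i,j} ρ_{ij}`. The trace norm is invariant under such reindexings
(`(P A Q)† (P A Q) = Q† (A† A) Q`, and the square root commutes with this conjugation), and it is
additive over diagonal blocks, because the positive square root of a block diagonal positive
matrix is the block diagonal matrix of the square roots.
-/

open scoped Kronecker ComplexOrder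
open Matrix

/-- The old Mathlib `Matrix.PosSemidef.sqrt`, spelled out. -/
noncomputable def psdSqrtOld {ι : Type*} [Fintype ι] [DecidableEq ι] {A : Matrix ι ι ℂ}
    (hA : A.PosSemidef) : Matrix ι ι ℂ :=
  hA.1.eigenvectorUnitary.1 * diagonal ((↑) ∘ (√·) ∘ hA.1.eigenvalues) *
    (star hA.1.eigenvectorUnitary : Matrix ι ι ℂ)

noncomputable def traceNorm {ι : Type*} [Fintype ι] [DecidableEq ι] (A : Matrix ι ι ℂ) : ℝ :=
  ((psdSqrtOld (Matrix.posSemidef_conjTranspose_mul_self A)).trace).re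

noncomputable def l1Norm {ι κ : Type*} [Fintype ι] [Fintype κ] (A : Matrix ι κ ℂ) : ℝ :=
  ∑ i, ∑ j, ‖A i j‖

def ptranspose {α β : Type*} (ρ : Matrix (α × β) (α × β) ℂ) : Matrix (α × β) (α × β) ℂ :=
  Matrix.of fun p q => ρ (p.1, q.2) (q.1, p.2)

noncomputable def negativity {α β : Type*} [Fintype α] [Fintype β] [DecidableEq α] [DecidableEq β]
    (ρ : Matrix (α × β) (α × β) ℂ) : ℝ :=
  (traceNorm (ptranspose ρ) - 1) / 2

def matUnit {ι : Type*} [DecidableEq ι] (i j : ι) : Matrix ι ι ℂ :=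
  Matrix.single i j 1

noncomputable def mcs {n : ℕ} (t : Fin n → Fin n → ℂ) :
    Matrix (Fin n × Fin n) (Fin n × Fin n) ℂ :=
  ∑ i, ∑ j, t i j • (matUnit i j ⊗ₖ matUnit i j)

def blockOf {m n : ℕ} (ρ : Matrix (Fin m × Fin n) (Fin m × Fin n) ℂ) (i j : Fin m) :
    Matrix (Fin n) (Fin n) ℂ :=
  Matrix.of fun k l => ρ (i, k) (j, l)

noncomputable def conjU {m n : ℕ} (U : Matrix.unitaryGroup (Fin m) ℂ)
    (ρ : Matrix (Fin m × Fin n) (Fin m × Fin n) ℂ) : Matrix (Fin m × Fin n) (Fin m × Fin n) ℂ :=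
  ((U : Matrix (Fin m) (Fin m) ℂ) ⊗ₖ (1 : Matrix (Fin n) (Fin n) ℂ))ᴴ * ρ *
    ((U : Matrix (Fin m) (Fin m) ℂ) ⊗ₖ (1 : Matrix (Fin n) (Fin n) ℂ))

noncomputable def conjUV {m n : ℕ} (U : Matrix.unitaryGroup (Fin m) ℂ)
    (V : Matrix.unitaryGroup (Fin n) ℂ)
    (ρ : Matrix (Fin m × Fin n) (Fin m × Fin n) ℂ) : Matrix (Fin m × Fin n) (Fin m × Fin n) ℂ :=
  ((U : Matrix (Fin m) (Fin m) ℂ) ⊗ₖ (V : Matrix (Fin n) (Fin n) ℂ))ᴴ * ρ *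
    ((U : Matrix (Fin m) (Fin m) ℂ) ⊗ₖ (V : Matrix (Fin n) (Fin n) ℂ))

noncomputable def QNA {m n : ℕ} (ρ : Matrix (Fin m × Fin n) (Fin m × Fin n) ℂ) : ℝ :=
  ⨅ U : Matrix.unitaryGroup (Fin m) ℂ,
    ((∑ i, ∑ j, traceNorm (blockOf (conjU U ρ) i j)) - 1) / 2

noncomputable def QNAB {m n : ℕ} (ρ : Matrix (Fin m × Fin n) (Fin m × Fin n) ℂ) : ℝ :=
  ⨅ U : Matrix.unitaryGroup (Fin m) ℂ, ⨅ V : Matrix.unitaryGroup (Fin n) ℂ,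
    (l1Norm (conjUV U V ρ) - 1) / 2

/-- The one-sided pre-measurement state `ρ̃ = Σ_{i,j} E_{ij} ⊗ ρ_{ij} ⊗ E_{ij}`
on `ℂ^m ⊗ ℂ^n ⊗ ℂ^m`. -/
noncomputable def premeas1 {m n : ℕ} (ρ : Matrix (Fin m × Fin n) (Fin m × Fin n) ℂ) :
    Matrix ((Fin m × Fin n) × Fin m) ((Fin m × Fin n) × Fin m) ℂ :=
  ∑ i, ∑ j, (matUnit i j ⊗ₖ blockOf ρ i j) ⊗ₖ matUnit i j

open scoped MatrixOrder

lemma Matrix.trace_submatrix_equiv {ι κ R : Type*} [Fintype ι] [Fintype κ] [AddCommMonoid R]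
    (A : Matrix ι ι R) (e : κ ≃ ι) : (A.submatrix e e).trace = A.trace :=
  e.sum_comp fun i => A i i

section TraceNorm

variable {ι κ : Type*} [Fintype ι] [DecidableEq ι] [Fintype κ] [DecidableEq κ]

lemma traceNorm_eq_re_trace_sqrt (A : Matrix ι ι ℂ) :
    traceNorm A = (CFC.sqrt (Aᴴ * A)).trace.re := by
  have hA := posSemidef_conjTranspose_mul_self A
  rw [traceNorm, CFC.sqrt_eq_real_sqrt _ hA.nonneg, cfcₙ_eq_cfc, hA.1.cfc_eq, IsHermitian.cfc,
    Unitary.conjStarAlgAut_apply]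
  rfl

lemma CFC.sqrt_submatrix_equiv {A : Matrix ι ι ℂ} (hA : A.PosSemidef) (e : κ ≃ ι) :
    CFC.sqrt (A.submatrix e e) = (CFC.sqrt A).submatrix e e :=
  CFC.sqrt_unique (by rw [submatrix_mul_equiv, CFC.sqrt_mul_sqrt_self A hA.nonneg])
    ((CFC.sqrt_nonneg A).posSemidef.submatrix e).nonneg

lemma traceNorm_submatrix_equiv (A : Matrix ι ι ℂ) (e₁ e₂ : κ ≃ ι) :
    traceNorm (A.submatrix e₁ e₂) = traceNorm A := by
  rw [traceNorm_eq_re_trace_sqrt, traceNorm_eq_re_trace_sqrt, conjTranspose_submatrix,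
    submatrix_mul_equiv, CFC.sqrt_submatrix_equiv (posSemidef_conjTranspose_mul_self A),
    trace_submatrix_equiv]

lemma posSemidef_blockDiagonal {d : κ → Matrix ι ι ℂ} (hd : ∀ k, (d k).PosSemidef) :
    (blockDiagonal d).PosSemidef := by
  choose B hB using fun k => CStarAlgebra.nonneg_iff_eq_star_mul_self.mp (hd k).nonneg
  have hd_eq : blockDiagonal d = (blockDiagonal B)ᴴ * blockDiagonal B := by
    rw [blockDiagonal_conjTranspose, ← blockDiagonal_mul, funext hB]
    rfl
  exact hd_eq ▸ posSemidef_conjTranspose_mul_self _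

lemma CFC.sqrt_blockDiagonal {d : κ → Matrix ι ι ℂ} (hd : ∀ k, (d k).PosSemidef) :
    CFC.sqrt (blockDiagonal d) = blockDiagonal fun k => CFC.sqrt (d k) :=
  CFC.sqrt_unique
    (by rw [← blockDiagonal_mul]; exact congrArg _ (funext fun k =>
      CFC.sqrt_mul_sqrt_self _ (hd k).nonneg))
    (posSemidef_blockDiagonal fun k => (CFC.sqrt_nonneg (d k)).posSemidef).nonneg

lemma traceNorm_blockDiagonal (d : κ → Matrix ι ι ℂ) :
    traceNorm (blockDiagonal d) = ∑ k, traceNorm (d k) := by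
  simp only [traceNorm_eq_re_trace_sqrt, blockDiagonal_conjTranspose, ← blockDiagonal_mul,
    CFC.sqrt_blockDiagonal fun k => posSemidef_conjTranspose_mul_self (d k),
    trace_blockDiagonal, Complex.re_sum]

end TraceNorm

def prodRotateEquiv (α β γ : Type*) : (α × β) × γ ≃ β × (α × γ) where
  toFun x := (x.1.2, (x.1.1, x.2))
  invFun y := ((y.2.1, y.1), y.2.2)
  left_inv _ := rfl
  right_inv _ := rfl

lemma premeas1_apply {m n : ℕ} (ρ : Matrix (Fin m × Fin n) (Fin m × Fin n) ℂ)
    (a a' c c' : Fin m) (b b' : Fin n) :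
    premeas1 ρ ((a, b), c) ((a', b'), c') = if c = a ∧ c' = a' then ρ (a, b) (a', b') else 0 := by
  simp only [premeas1, matUnit, single, ite_and, blockOf, Matrix.sum_apply, kroneckerMap_apply,
    of_apply, ite_mul, one_mul, zero_mul, mul_ite, mul_one, mul_zero, Finset.sum_ite_irrel,
    Finset.sum_ite_eq', Finset.mem_univ, ↓reduceIte, Finset.sum_const_zero]
  grind

lemma ptranspose_premeas1 {m n : ℕ} (ρ : Matrix (Fin m × Fin n) (Fin m × Fin n) ℂ) :
    ptranspose (premeas1 ρ) =
      (blockDiagonal fun p : Fin m × Fin m => blockOf ρ p.1 p.2).submatrix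
        (prodRotateEquiv _ _ _)
        ((prodRotateEquiv _ _ _).trans ((Equiv.refl _).prodCongr (Equiv.prodComm _ _))) := by
  ext ⟨⟨a, b⟩, c⟩ ⟨⟨a', b'⟩, c'⟩
  simp only [ptranspose, of_apply, premeas1_apply, submatrix_apply, blockDiagonal_apply,
    prodRotateEquiv, Equiv.trans_apply, Equiv.coe_fn_mk, Equiv.prodCongr_apply, Equiv.coe_refl,
    Equiv.prodComm_apply, Prod.map, id, Prod.swap, Prod.mk.injEq, blockOf]
  grind

lemma traceNorm_ptranspose_premeas1 {m n : ℕ} (ρ : Matrix (Fin m × Fin n) (Fin m × Fin n) ℂ) :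
    traceNorm (ptranspose (premeas1 ρ)) = ∑ i, ∑ j, traceNorm (blockOf ρ i j) := by
  rw [ptranspose_premeas1, traceNorm_submatrix_equiv, traceNorm_blockDiagonal,
    Fintype.sum_prod_type]

theorem stmt_3_general {m n : ℕ} (ρ : Matrix (Fin m × Fin n) (Fin m × Fin n) ℂ) :
    traceNorm (ptranspose (premeas1 ρ)) = ∑ i, ∑ j, traceNorm (blockOf ρ i j) ∧
    negativity (premeas1 ρ) = (1/2) * ((∑ i, ∑ j, traceNorm (blockOf ρ i j)) - 1) := by
  refine ⟨traceNorm_ptranspose_premeas1 ρ, ?_⟩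
  rw [negativity, traceNorm_ptranspose_premeas1]
  ring

/-- the trace norm of the partial transpose (w.r.t. the third factor)
of the one-sided pre-measurement state equals `Σ_{i,j} ‖ρ_{ij}‖₁`; hence its
negativity across the cut (first two factors):(third factor) is
`(1/2)(Σ_{i,j} ‖ρ_{ij}‖₁ − 1)`. -/
theorem stmt_3 {m n : ℕ} (ρ : Matrix (Fin m × Fin n) (Fin m × Fin n) ℂ)
    (hpos : ρ.PosSemidef) (htr : ρ.trace = 1) :
    traceNorm (ptranspose (premeas1 ρ)) = ∑ i, ∑ j, traceNorm (blockOf ρ i j) ∧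
    negativity (premeas1 ρ) = (1/2) * ((∑ i, ∑ j, traceNorm (blockOf ρ i j)) - 1) :=
  stmt_3_general ρ
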